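/- arXiv:2412.12005 — 3 statements merged into one kernel-verified Lean document; each statement's English description precedes it below -/
import Mathlib

section
/- Let q be a prime power and m a positive integer with m ≤ q, and suppose gcd(C(m,2), q−1) = 1. Then for every λ ∈ F_q with λ ≠ 0, the number of distinguished points x ∈ F_q^m with v_m(x) = λ equals P(q,m)/(q−1), i.e., (q−1)·#{x ∈ F_q^m distinguished : v_m(x) = λ} = P(q,m). -/
open MvPolynomial Finset

/-- The Vandermonde polynomial `v_m = ∏_{i<j} (x_i - x_j)` in `m` variables. -/
noncomputable def vand (K : Type*) [CommRing K] (m : ℕ) : MvPolynomial (Fin m) K :=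
  ∏ p ∈ Finset.univ.filter (fun p : Fin m × Fin m => p.1 < p.2), (X p.1 - X p.2)

/-- `P(q,m) = C(q,m)·m!` (which is `0` when `m > q`). -/
def Pnum (q m : ℕ) : ℕ := q.choose m * m.factorial

lemma card_lt_pairs (m : ℕ) :
    (Finset.univ.filter fun p : Fin m × Fin m => p.1 < p.2).card = m.choose 2 := by
  rw [Finset.card_eq_sum_card_fiberwise (f := Prod.snd) (t := Finset.univ)
    (fun p _ => Finset.mem_univ _)]
  have h1 : ∀ j : Fin m,
      ((Finset.univ.filter fun p : Fin m × Fin m => p.1 < p.2).filter fun p => p.2 = j).card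
        = (j : ℕ) := by
    intro j
    have : ((Finset.univ.filter fun p : Fin m × Fin m => p.1 < p.2).filter fun p => p.2 = j)
        = (Finset.Iio j).image (fun i => (i, j)) := by
      ext ⟨a, b⟩
      simp only [Finset.mem_filter, Finset.mem_univ, true_and, Finset.mem_image,
        Finset.mem_Iio, Prod.mk.injEq]
      constructor
      · rintro ⟨h1, rfl⟩; exact ⟨a, h1, rfl, rfl⟩
      · rintro ⟨i, hi, rfl, rfl⟩; exact ⟨hi, rfl⟩
    rw [this, Finset.card_image_of_injective _ (fun a b h => (Prod.mk.injEq _ _ _ _).mp h |>.1),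
      Fin.card_Iio]
  simp_rw [h1]
  rw [Fin.sum_univ_eq_sum_range (fun i => i), Finset.sum_range_id, Nat.choose_two_right]

section aux

variable {m : ℕ} {F : Type} [Field F] [Fintype F] [DecidableEq F]

lemma eval_vand (x : Fin m → F) :
    eval x (vand F m)
      = ∏ p ∈ Finset.univ.filter (fun p : Fin m × Fin m => p.1 < p.2), (x p.1 - x p.2) := by
  simp [vand]

lemma inj_iff_vand (x : Fin m → F) :
    Function.Injective x ↔ eval x (vand F m) ≠ 0 := by
  rw [eval_vand]
  constructor
  · intro hx
    rw [Finset.prod_ne_zero_iff]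
    intro p hp
    simp only [Finset.mem_filter, Finset.mem_univ, true_and] at hp
    exact sub_ne_zero.mpr (fun h => absurd (hx h) hp.ne)
  · intro h i j hij
    by_contra hne
    rcases lt_or_gt_of_ne hne with hl | hl
    · exact h (Finset.prod_eq_zero (i := (i, j)) (by simp [hl]) (sub_eq_zero.mpr hij))
    · exact h (Finset.prod_eq_zero (i := (j, i)) (by simp [hl]) (sub_eq_zero.mpr hij.symm))

lemma eval_vand_smul (c : F) (x : Fin m → F) :
    eval (fun i => c * x i) (vand F m) = c ^ (m.choose 2) * eval x (vand F m) := by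
  rw [eval_vand, eval_vand]
  simp_rw [← mul_sub]
  rw [Finset.prod_mul_distrib, Finset.prod_const, card_lt_pairs]

/-- The fiber as a finset. -/
noncomputable def fib (m : ℕ) (F : Type) [Field F] [Fintype F] [DecidableEq F] (l : F) :
    Finset (Fin m → F) :=
  Finset.univ.filter fun x => Function.Injective x ∧ eval x (vand F m) = l

lemma fib_card_eq (q : ℕ) (hcard : Fintype.card F = q)
    (hgcd : Nat.gcd (m.choose 2) (q - 1) = 1)
    {lam mu : F} (hlam : lam ≠ 0) (hmu : mu ≠ 0) :
    (fib m F lam).card = (fib m F mu).card := by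
  have hcop : (Nat.card Fˣ).Coprime (m.choose 2) := by
    rw [Nat.card_units, Nat.card_eq_fintype_card, hcard]
    exact (Nat.coprime_comm.mp hgcd)
  obtain ⟨c, hc⟩ := (powCoprime hcop).surjective (Units.mk0 mu hmu * (Units.mk0 lam hlam)⁻¹)
  have hc' : (c : F) ^ (m.choose 2) * lam = mu := by
    have := congrArg (fun u : Fˣ => (u : F)) hc
    simp only [powCoprime, Equiv.coe_fn_mk] at this
    push_cast at this
    rw [this]
    simp only [Units.val_mk0]
    field_simp
  have hc0 : (c : F) ≠ 0 := c.ne_zero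
  apply Finset.card_bij' (fun x _ => fun i => (c : F) * x i)
    (fun x _ => fun i => (c : F)⁻¹ * x i)
  · intro x hx
    simp only [fib, Finset.mem_filter, Finset.mem_univ, true_and] at hx ⊢
    refine ⟨fun i j hij => hx.1 (mul_left_cancel₀ hc0 hij), ?_⟩
    rw [eval_vand_smul, hx.2, hc']
  · intro x hx
    simp only [fib, Finset.mem_filter, Finset.mem_univ, true_and] at hx ⊢
    have hci : ((c : F)⁻¹) ≠ 0 := inv_ne_zero hc0
    refine ⟨fun i j hij => hx.1 (mul_left_cancel₀ hci hij), ?_⟩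
    rw [eval_vand_smul, hx.2, ← hc', inv_pow]
    field_simp
  · intro x _; funext i; field_simp
  · intro x _; funext i; field_simp

end aux

/-- If `gcd(C(m,2), q-1) = 1`, each nonzero `λ ∈ F_q` has exactly
`P(q,m)/(q-1)` distinguished preimages under `v_m`. -/
theorem stmt5 (q m : ℕ) (F : Type) [Field F] [Fintype F]
    (hcard : Fintype.card F = q) (hm : 0 < m) (hmq : m ≤ q)
    (hgcd : Nat.gcd (m.choose 2) (q - 1) = 1)
    (lam : F) (hlam : lam ≠ 0) :
    (q - 1) * Set.ncard {x : Fin m → F | Function.Injective x ∧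
        eval x (vand F m) = lam}
      = Pnum q m := by
  classical
  have hset : {x : Fin m → F | Function.Injective x ∧ eval x (vand F m) = lam}
      = ↑(fib m F lam) := by
    ext x; simp [fib]
  rw [hset, Set.ncard_coe_finset]
  -- total count of injective functions
  have htotal : (Finset.univ.filter fun x : Fin m → F => Function.Injective x).card
      = q.descFactorial m := by
    rw [← Fintype.card_subtype]
    rw [Fintype.card_congr (Equiv.subtypeInjectiveEquivEmbedding (Fin m) F),
      Fintype.card_embedding_eq, hcard, Fintype.card_fin]
  -- fiberwise decomposition
  have hfib : (Finset.univ.filter fun x : Fin m → F => Function.Injective x).card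
      = ∑ l ∈ Finset.univ.filter (fun l : F => l ≠ 0), (fib m F l).card := by
    rw [Finset.card_eq_sum_card_fiberwise (f := fun x => eval x (vand F m))
      (t := Finset.univ.filter (fun l : F => l ≠ 0))]
    · apply Finset.sum_congr rfl
      intro l _
      rw [fib, Finset.filter_filter]
    · intro x hx
      simp only [Finset.coe_filter, Finset.mem_filter, Finset.mem_univ, true_and,
        Set.mem_setOf_eq] at hx ⊢
      exact (inj_iff_vand x).mp hx
  have hconst : ∑ l ∈ Finset.univ.filter (fun l : F => l ≠ 0), (fib m F l).card
      = (q - 1) * (fib m F lam).card := by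
    rw [Finset.sum_congr rfl (fun l hl => fib_card_eq q hcard hgcd
      ((Finset.mem_filter.mp hl).2) hlam), Finset.sum_const, smul_eq_mul]
    congr 1
    rw [Finset.filter_ne', Finset.card_erase_of_mem (Finset.mem_univ _), Finset.card_univ, hcard]
  have : q.descFactorial m = (q - 1) * (fib m F lam).card := by
    rw [← htotal, hfib, hconst]
  rw [← this, Pnum, Nat.descFactorial_eq_factorial_mul_choose, mul_comm]
end

section
/- Let q be a prime power and m a positive integer. Let s1 and s2 be nonzero F_q-linear combinations of the elementary symmetric polynomials σ_m^0,…,σ_m^m. If s1 and s2 have a common non-unit divisor in \overline{F_q}[x_1,…,x_m] (where \overline{F_q} is an algebraic closure of F_q), then s1 and s2 are linearly dependent over F_q, i.e., s2 = c·s1 for some c ∈ F_q. -/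
open MvPolynomial

/-- `s` is a linear combination of the elementary symmetric polynomials
`σ_m^0, …, σ_m^m`. -/
def IsElemSymmComb {K : Type*} [CommSemiring K] {m : ℕ}
    (s : MvPolynomial (Fin m) K) : Prop :=
  ∃ a : Fin (m + 1) → K, s = ∑ i : Fin (m + 1), C (a i) * esymm (Fin m) K (i : ℕ)

namespace Stmt10Aux

open AddMonoidAlgebra

variable {m : ℕ} {K : Type*} [Field K]

lemma supDegree_mul' {p q : MvPolynomial (Fin m) K} (hp : p ≠ 0) (hq : q ≠ 0) :
    (p * q).supDegree (toLex (α := Fin m →₀ ℕ)) = p.supDegree toLex + q.supDegree toLex :=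
  supDegree_mul toLex.injective (fun _ _ => rfl)
    (mul_ne_zero ((leadingCoeff_ne_zero toLex.injective).mpr hp)
      ((leadingCoeff_ne_zero toLex.injective).mpr hq)) hp hq

lemma eq_C_of_supDegree_le_zero {p : MvPolynomial (Fin m) K}
    (h : p.supDegree (toLex (α := Fin m →₀ ℕ)) ≤ 0) : p = C (coeff 0 p) := by
  ext s
  rcases eq_or_ne s 0 with rfl | hs
  · simp
  · rw [coeff_C, if_neg fun h' => hs h'.symm]
    by_contra hc
    have hmem : s ∈ p.support := mem_support_iff.mpr hc
    have h1 : toLex s ≤ p.supDegree (toLex (α := Fin m →₀ ℕ)) :=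
      Finset.le_sup (f := toLex (α := Fin m →₀ ℕ)) hmem
    have h0 : (0 : Lex (Fin m →₀ ℕ)) ≤ toLex s := bot_le
    exact hs (toLex.injective (le_antisymm (h1.trans h) h0))

lemma exists_C_of_isUnit {p : MvPolynomial (Fin m) K} (h : IsUnit p) :
    ∃ c : K, c ≠ 0 ∧ p = C c := by
  obtain ⟨u, rfl⟩ := h
  have hp : (u : MvPolynomial (Fin m) K) ≠ 0 := u.ne_zero
  have hw : ((u⁻¹ : _) : MvPolynomial (Fin m) K) ≠ 0 := u⁻¹.ne_zero
  have hmul : ((u : MvPolynomial (Fin m) K) * (u⁻¹ : _)) = 1 := u.mul_inv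
  have hdeg := supDegree_mul' hp hw
  rw [hmul] at hdeg
  have h1 : (1 : MvPolynomial (Fin m) K).supDegree (toLex (α := Fin m →₀ ℕ)) = 0 := by
    rw [AddMonoidAlgebra.one_def, supDegree_single_ne_zero _ one_ne_zero]; rfl
  rw [h1] at hdeg
  have hb : (0 : Lex (Fin m →₀ ℕ)) ≤
      ((u⁻¹ : _) : MvPolynomial (Fin m) K).supDegree toLex := bot_le
  have hle : ((u : MvPolynomial (Fin m) K)).supDegree (toLex (α := Fin m →₀ ℕ)) ≤ 0 := by
    calc ((u : MvPolynomial (Fin m) K)).supDegree (toLex (α := Fin m →₀ ℕ))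
        = ((u : MvPolynomial (Fin m) K)).supDegree (toLex (α := Fin m →₀ ℕ)) + 0 := by
          rw [add_zero]
      _ ≤ ((u : MvPolynomial (Fin m) K)).supDegree toLex +
            ((u⁻¹ : _) : MvPolynomial (Fin m) K).supDegree toLex := add_le_add le_rfl hb
      _ = 0 := hdeg.symm ▸ rfl
  refine ⟨MvPolynomial.coeff 0 (u : MvPolynomial (Fin m) K), ?_, eq_C_of_supDegree_le_zero hle⟩
  intro h0
  apply hp
  rw [eq_C_of_supDegree_le_zero hle, h0, map_zero]

/-- the affine-linear polynomial attached to coefficients -/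
noncomputable def L (b0 : K) (b : Fin m → K) : MvPolynomial (Fin m) K :=
  C b0 + ∑ i : Fin m, C (b i) * X i

lemma coeff_L_single (b0 : K) (b : Fin m → K) (j : Fin m) :
    coeff (Finsupp.single j 1) (L b0 b) = b j := by
  classical
  have hne : (Finsupp.single j 1 : Fin m →₀ ℕ) ≠ 0 := by
    simp [Finsupp.single_eq_zero]
  simp only [L, MvPolynomial.coeff_add, coeff_C, if_neg (fun h : (0 : Fin m →₀ ℕ) = _ => hne h.symm),
    C_mul_X_eq_monomial, MvPolynomial.coeff_sum, coeff_monomial, zero_add]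
  calc ∑ i : Fin m, (if (Finsupp.single i 1 : Fin m →₀ ℕ) = Finsupp.single j 1
          then b i else 0)
      = ∑ i : Fin m, (if i = j then b i else 0) :=
        Finset.sum_congr rfl (fun i _ =>
          if_congr (Finsupp.single_left_inj one_ne_zero) rfl rfl)
    _ = b j := by simp

lemma coeff_L_ne_zero {b0 : K} {b : Fin m → K} {s : Fin m →₀ ℕ}
    (h : coeff s (L b0 b) ≠ 0) : s = 0 ∨ ∃ i : Fin m, s = Finsupp.single i 1 := by
  by_contra hc
  push_neg at hc
  obtain ⟨hs0, hsi⟩ := hc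
  apply h
  simp only [L, MvPolynomial.coeff_add, coeff_C, if_neg (fun h' : (0 : Fin m →₀ ℕ) = s => hs0 h'.symm),
    C_mul_X_eq_monomial, MvPolynomial.coeff_sum, coeff_monomial, zero_add]
  refine Finset.sum_eq_zero fun i _ => ?_
  rw [if_neg (fun h' : (Finsupp.single i 1 : Fin m →₀ ℕ) = s => hsi i h'.symm)]

lemma L_ne_zero {b0 : K} {b : Fin m → K} {j : Fin m} (hj : b j ≠ 0) : L b0 b ≠ 0 := by
  intro h
  apply hj
  rw [← coeff_L_single b0 b j, h, MvPolynomial.coeff_zero]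

lemma L_irreducible {b0 : K} {b : Fin m → K} {j : Fin m} (hj : b j ≠ 0) :
    Irreducible (L b0 b) := by
  have hL0 : L b0 b ≠ 0 := L_ne_zero hj
  -- the supDegree of L is toLex (single j' 1) for some j'
  obtain ⟨s, hs, hsup⟩ := exists_supDegree_mem_support (toLex (α := Fin m →₀ ℕ)) hL0
  have hjmem : Finsupp.single j 1 ∈ (L b0 b).support := by
    rw [mem_support_iff, coeff_L_single]; exact hj
  have hsne10 : (Finsupp.single j 1 : Fin m →₀ ℕ) ≠ 0 := by
    simp [Finsupp.single_eq_zero]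
  have hjle : toLex (Finsupp.single j 1) ≤ (L b0 b).supDegree (toLex (α := Fin m →₀ ℕ)) :=
    Finset.le_sup (f := toLex (α := Fin m →₀ ℕ)) hjmem
  have hcases := coeff_L_ne_zero (mem_support_iff.mp hs)
  have hs_ne : s ≠ 0 := by
    rintro rfl
    rw [hsup] at hjle
    have h0 : (0 : Lex (Fin m →₀ ℕ)) ≤ toLex (Finsupp.single j 1) := bot_le
    have : toLex (Finsupp.single j 1) = toLex (0 : Fin m →₀ ℕ) := le_antisymm hjle h0
    exact hsne10 (toLex.injective this)
  obtain ⟨j', hj'⟩ := hcases.resolve_left hs_ne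
  subst hj'
  constructor
  · -- not a unit
    intro hunit
    obtain ⟨c, -, hc⟩ := exists_C_of_isUnit hunit
    apply hj
    have := coeff_L_single b0 b j
    rw [hc, coeff_C, if_neg (fun h' : (0 : Fin m →₀ ℕ) = _ => hsne10 h'.symm)] at this
    exact this.symm
  · -- factors
    intro f g hfg
    have hf0 : f ≠ 0 := fun h => hL0 (by rw [hfg, h, zero_mul])
    have hg0 : g ≠ 0 := fun h => hL0 (by rw [hfg, h, mul_zero])
    have hdeg : f.supDegree (toLex (α := Fin m →₀ ℕ)) + g.supDegree toLex =
        toLex (Finsupp.single j' 1) := by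
      rw [← supDegree_mul' hf0 hg0, ← hfg, hsup]
    have hdeg' : ofLex (f.supDegree (toLex (α := Fin m →₀ ℕ))) +
        ofLex (g.supDegree (toLex (α := Fin m →₀ ℕ))) = Finsupp.single j' 1 :=
      congrArg ofLex hdeg
    set u := ofLex (f.supDegree (toLex (α := Fin m →₀ ℕ))) with hu
    set v := ofLex (g.supDegree (toLex (α := Fin m →₀ ℕ))) with hv
    have happ : ∀ i : Fin m, u i + v i = (Finsupp.single j' 1 : Fin m →₀ ℕ) i := by
      intro i
      rw [← Finsupp.add_apply, hdeg']
    have hkey : u = 0 ∨ v = 0 := by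
      have hj'app := happ j'
      rw [Finsupp.single_eq_same] at hj'app
      have : u j' = 0 ∨ v j' = 0 := by omega
      rcases this with h | h
      · left
        ext i
        rcases eq_or_ne i j' with rfl | hij
        · simpa using h
        · have := happ i
          rw [Finsupp.single_eq_of_ne' (Ne.symm hij)] at this
          simpa using Nat.eq_zero_of_add_eq_zero_right this
      · right
        ext i
        rcases eq_or_ne i j' with rfl | hij
        · simpa using h
        · have := happ i
          rw [Finsupp.single_eq_of_ne' (Ne.symm hij)] at this
          simpa using Nat.eq_zero_of_add_eq_zero_left this
    have unit_of_deg_zero : ∀ p : MvPolynomial (Fin m) K, p ≠ 0 →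
        ofLex (p.supDegree (toLex (α := Fin m →₀ ℕ))) = 0 → IsUnit p := by
      intro p hp hdz
      have hle : p.supDegree (toLex (α := Fin m →₀ ℕ)) ≤ 0 := by
        have : p.supDegree (toLex (α := Fin m →₀ ℕ)) = toLex (0 : Fin m →₀ ℕ) := by
          apply_fun toLex at hdz
          simpa using hdz
        rw [this]
        exact le_rfl
      have hpc := eq_C_of_supDegree_le_zero hle
      have hc0 : MvPolynomial.coeff 0 p ≠ 0 := fun h => hp (by rw [hpc, h, map_zero])
      rw [hpc]
      rw [isUnit_iff_exists_inv]
      exact ⟨C (MvPolynomial.coeff 0 p)⁻¹, by rw [← C_mul, mul_inv_cancel₀ hc0, C_1]⟩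
    rcases hkey with h | h
    · exact Or.inl (unit_of_deg_zero f hf0 h)
    · exact Or.inr (unit_of_deg_zero g hg0 h)

/-- transfer divisibility through the fundamental theorem of symmetric polynomials -/
lemma dvd_of_esymm_dvd {P Q : MvPolynomial (Fin m) K}
    (h : ((esymmAlgHom (Fin m) K m P : symmetricSubalgebra (Fin m) K) :
        MvPolynomial (Fin m) K) ∣
      ((esymmAlgHom (Fin m) K m Q : symmetricSubalgebra (Fin m) K) :
        MvPolynomial (Fin m) K)) : P ∣ Q := by
  have hinj : Function.Injective (esymmAlgHom (Fin m) K m) :=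
    esymmAlgHom_fin_injective K le_rfl
  obtain ⟨g, hg⟩ := h
  rcases eq_or_ne P 0 with rfl | hP
  · rw [map_zero] at hg
    rw [ZeroMemClass.coe_zero, zero_mul] at hg
    have hQ : Q = 0 := hinj (by
      rw [map_zero]
      exact Subtype.ext (by rw [ZeroMemClass.coe_zero, hg]))
    rw [hQ]
  · have hEP : ((esymmAlgHom (Fin m) K m P : symmetricSubalgebra (Fin m) K) :
        MvPolynomial (Fin m) K) ≠ 0 := by
      intro h0
      refine hP (hinj ?_)
      rw [map_zero]
      exact Subtype.ext (by rw [ZeroMemClass.coe_zero, h0])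
    have hgsym : IsSymmetric g := by
      intro π
      have h1 := congrArg (rename (⇑π)) hg
      rw [map_mul] at h1
      have hQs := (mem_symmetricSubalgebra _).mp (esymmAlgHom (Fin m) K m Q).2
      have hPs := (mem_symmetricSubalgebra _).mp (esymmAlgHom (Fin m) K m P).2
      rw [hQs π, hPs π] at h1
      exact (mul_left_cancel₀ hEP (hg ▸ h1)).symm
    obtain ⟨G, hG⟩ := esymmAlgHom_fin_surjective (R := K) le_rfl ⟨g, hgsym⟩
    refine ⟨G, hinj ?_⟩
    rw [map_mul]
    apply Subtype.ext
    rw [MulMemClass.coe_mul]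
    rw [congrArg Subtype.val hG]
    exact hg

lemma esymmAlgHom_L (a : Fin (m + 1) → K) :
    ((esymmAlgHom (Fin m) K m (L (a 0) (fun i => a i.succ)) :
        symmetricSubalgebra (Fin m) K) : MvPolynomial (Fin m) K)
      = ∑ i : Fin (m + 1), C (a i) * esymm (Fin m) K (i : ℕ) := by
  rw [esymmAlgHom_apply]
  rw [Fin.sum_univ_succ]
  simp only [L, map_add, map_sum, map_mul, aeval_C, aeval_X, algebraMap_eq,
    Fin.val_zero, esymm_zero, mul_one, Fin.val_succ]

end Stmt10Aux

open Stmt10Aux in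
/-- The main lemma over an arbitrary field. -/
lemma stmt10_key {m : ℕ} {K : Type*} [Field K] (a1 a2 : Fin (m + 1) → K)
    (S1 S2 : MvPolynomial (Fin m) K)
    (h1 : S1 = ∑ i : Fin (m + 1), C (a1 i) * esymm (Fin m) K (i : ℕ))
    (h2 : S2 = ∑ i : Fin (m + 1), C (a2 i) * esymm (Fin m) K (i : ℕ))
    (hS1 : S1 ≠ 0) (hS2 : S2 ≠ 0)
    (h : MvPolynomial (Fin m) K) (hu : ¬ IsUnit h) (hd1 : h ∣ S1) (hd2 : h ∣ S2) :
    ∃ c : K, S2 = C c * S1 := by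
  classical
  set ℓ1 : MvPolynomial (Fin m) K := L (a1 0) (fun i => a1 i.succ) with hℓ1def
  set ℓ2 : MvPolynomial (Fin m) K := L (a2 0) (fun i => a2 i.succ) with hℓ2def
  have hE1 : ((esymmAlgHom (Fin m) K m ℓ1 : symmetricSubalgebra (Fin m) K) :
      MvPolynomial (Fin m) K) = S1 := by rw [hℓ1def, esymmAlgHom_L, h1]
  have hE2 : ((esymmAlgHom (Fin m) K m ℓ2 : symmetricSubalgebra (Fin m) K) :
      MvPolynomial (Fin m) K) = S2 := by rw [hℓ2def, esymmAlgHom_L, h2]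
  -- the linear part of each combination must be nontrivial
  have hconst : ∀ (a : Fin (m + 1) → K) (S : MvPolynomial (Fin m) K),
      ((esymmAlgHom (Fin m) K m (L (a 0) (fun i => a i.succ)) :
        symmetricSubalgebra (Fin m) K) : MvPolynomial (Fin m) K) = S → S ≠ 0 → h ∣ S →
      ∃ j : Fin m, a j.succ ≠ 0 := by
    intro a S hE hS hd
    by_contra hall
    push_neg at hall
    have hLC : L (a 0) (fun i => a i.succ) = C (a 0) := by
      simp [L, hall]
    rw [hLC] at hE
    have hSC : S = C (a 0) := by
      rw [← hE, ← algebraMap_eq, AlgHom.commutes]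
      rfl
    have ha0 : a 0 ≠ 0 := fun h0 => hS (by rw [hSC, h0, map_zero])
    have hSunit : IsUnit S := by
      rw [hSC, isUnit_iff_exists_inv]
      exact ⟨C (a 0)⁻¹, by rw [← C_mul, mul_inv_cancel₀ ha0, C_1]⟩
    exact hu (isUnit_of_dvd_unit hd hSunit)
  obtain ⟨j1, hj1⟩ := hconst a1 S1 hE1 hS1 hd1
  obtain ⟨j2, hj2⟩ := hconst a2 S2 hE2 hS2 hd2
  have hℓ1irr : Irreducible ℓ1 := L_irreducible hj1
  have hℓ2irr : Irreducible ℓ2 := L_irreducible hj2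
  -- the norm of h
  set Nh : MvPolynomial (Fin m) K := ∏ π : Equiv.Perm (Fin m), rename (⇑π) h with hNh
  set M : ℕ := Fintype.card (Equiv.Perm (Fin m)) with hM
  have hhNh : h ∣ Nh := by
    have := Finset.dvd_prod_of_mem (fun π : Equiv.Perm (Fin m) => rename (⇑π) h)
      (Finset.mem_univ (1 : Equiv.Perm (Fin m)))
    simpa using this
  have hNsym : IsSymmetric Nh := by
    intro τ
    rw [hNh, map_prod]
    have hterm : ∀ π : Equiv.Perm (Fin m), rename (⇑τ) (rename (⇑π) h) =
        rename (⇑(τ * π)) h := by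
      intro π
      rw [rename_rename]
      rfl
    calc (∏ π : Equiv.Perm (Fin m), rename (⇑τ) (rename (⇑π) h))
        = ∏ π : Equiv.Perm (Fin m), rename (⇑(τ * π)) h :=
          Finset.prod_congr rfl fun π _ => hterm π
      _ = ∏ π : Equiv.Perm (Fin m), rename (⇑π) h :=
          Fintype.prod_equiv (Equiv.mulLeft τ) _ _ (fun π => rfl)
  have hdvdpow : ∀ S : MvPolynomial (Fin m) K, IsSymmetric S → h ∣ S → Nh ∣ S ^ M := by
    intro S hSsym hd
    have hπ : ∀ π : Equiv.Perm (Fin m), rename (⇑π) h ∣ S := by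
      intro π
      have := map_dvd (rename (⇑π) : MvPolynomial (Fin m) K →ₐ[K] MvPolynomial (Fin m) K) hd
      rwa [hSsym π] at this
    calc Nh ∣ ∏ _π : Equiv.Perm (Fin m), S :=
          Finset.prod_dvd_prod_of_dvd _ _ (fun π _ => hπ π)
      _ = S ^ M := by rw [Finset.prod_const, Finset.card_univ]
  have hS1sym : IsSymmetric S1 :=
    hE1 ▸ (mem_symmetricSubalgebra _).mp (esymmAlgHom (Fin m) K m ℓ1).2
  have hS2sym : IsSymmetric S2 :=
    hE2 ▸ (mem_symmetricSubalgebra _).mp (esymmAlgHom (Fin m) K m ℓ2).2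
  obtain ⟨P, hP⟩ := esymmAlgHom_fin_surjective (R := K) le_rfl ⟨Nh, hNsym⟩
  have hPv : ((esymmAlgHom (Fin m) K m P : symmetricSubalgebra (Fin m) K) :
      MvPolynomial (Fin m) K) = Nh := congrArg Subtype.val hP
  have hEpow : ∀ ℓ : MvPolynomial (Fin m) K,
      ((esymmAlgHom (Fin m) K m (ℓ ^ M) : symmetricSubalgebra (Fin m) K) :
        MvPolynomial (Fin m) K) =
      ((esymmAlgHom (Fin m) K m ℓ : symmetricSubalgebra (Fin m) K) :
        MvPolynomial (Fin m) K) ^ M := by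
    intro ℓ
    rw [map_pow, SubmonoidClass.coe_pow]
  have hPd1 : P ∣ ℓ1 ^ M := by
    apply dvd_of_esymm_dvd
    rw [hPv, hEpow, hE1]
    exact hdvdpow S1 hS1sym hd1
  have hPd2 : P ∣ ℓ2 ^ M := by
    apply dvd_of_esymm_dvd
    rw [hPv, hEpow, hE2]
    exact hdvdpow S2 hS2sym hd2
  have hPnu : ¬ IsUnit P := by
    intro hPu
    have : IsUnit Nh := hPv ▸ ((hPu.map (esymmAlgHom (Fin m) K m)).map
      (Subalgebra.val (symmetricSubalgebra (Fin m) K)))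
    exact hu (isUnit_of_dvd_unit hhNh this)
  have hP0 : P ≠ 0 := by
    rintro rfl
    rw [map_zero] at hP
    have hNh0 : Nh = 0 := by
      have := congrArg Subtype.val hP
      simpa using this.symm
    have hz : (0 : MvPolynomial (Fin m) K) ∣ S1 ^ M := hNh0 ▸ hdvdpow S1 hS1sym hd1
    have hMne : M ≠ 0 := Fintype.card_ne_zero
    exact hS1 ((pow_eq_zero_iff hMne).mp (zero_dvd_iff.mp hz))
  obtain ⟨r, hrirr, hrP⟩ := WfDvdMonoid.exists_irreducible_factor hPnu hP0
  have hrprime : Prime r := UniqueFactorizationMonoid.irreducible_iff_prime.mp hrirr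
  have hrℓ1 : r ∣ ℓ1 := hrprime.dvd_of_dvd_pow (hrP.trans hPd1)
  have hrℓ2 : r ∣ ℓ2 := hrprime.dvd_of_dvd_pow (hrP.trans hPd2)
  have hassoc : Associated ℓ1 ℓ2 :=
    (hrirr.associated_of_dvd hℓ1irr hrℓ1).symm.trans (hrirr.associated_of_dvd hℓ2irr hrℓ2)
  obtain ⟨w, hw⟩ := hassoc
  obtain ⟨c, hc0, hcw⟩ := exists_C_of_isUnit w.isUnit
  refine ⟨c, ?_⟩
  have : ℓ2 = ℓ1 * C c := by rw [← hw, hcw]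
  calc S2 = ((esymmAlgHom (Fin m) K m ℓ2 : symmetricSubalgebra (Fin m) K) :
        MvPolynomial (Fin m) K) := hE2.symm
    _ = ((esymmAlgHom (Fin m) K m (ℓ1 * C c) : symmetricSubalgebra (Fin m) K) :
        MvPolynomial (Fin m) K) := by rw [this]
    _ = C c * S1 := by
        rw [map_mul, MulMemClass.coe_mul, hE1, mul_comm]
        congr 1
        rw [← algebraMap_eq, AlgHom.commutes]
        rfl

/-- If two nonzero linear combinations of elementary symmetric polynomials have
a common non-unit divisor over the algebraic closure, then they are linearly
dependent over `F_q`. -/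
theorem stmt10 (q m : ℕ) (F : Type) [Field F] [Fintype F]
    (hcard : Fintype.card F = q) (hm : 0 < m)
    (s1 s2 : MvPolynomial (Fin m) F)
    (hs1 : IsElemSymmComb s1) (hs2 : IsElemSymmComb s2)
    (hs1ne : s1 ≠ 0) (hs2ne : s2 ≠ 0)
    (hcom : ∃ h : MvPolynomial (Fin m) (AlgebraicClosure F), ¬ IsUnit h ∧
      h ∣ MvPolynomial.map (algebraMap F (AlgebraicClosure F)) s1 ∧
      h ∣ MvPolynomial.map (algebraMap F (AlgebraicClosure F)) s2) :
    ∃ c : F, s2 = C c * s1 := by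
  classical
  set K := AlgebraicClosure F
  set φ := algebraMap F K with hφ
  have hφinj : Function.Injective φ := φ.injective
  have hmapinj : Function.Injective (MvPolynomial.map (σ := Fin m) φ) :=
    MvPolynomial.map_injective φ hφinj
  obtain ⟨a1, ha1⟩ := hs1
  obtain ⟨a2, ha2⟩ := hs2
  obtain ⟨h, hunotu, hd1, hd2⟩ := hcom
  have hmapcomb : ∀ (a : Fin (m + 1) → F) (s : MvPolynomial (Fin m) F),
      s = ∑ i : Fin (m + 1), C (a i) * esymm (Fin m) F (i : ℕ) →
      MvPolynomial.map φ s = ∑ i : Fin (m + 1), C (φ (a i)) * esymm (Fin m) K (i : ℕ) := by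
    intro a s hs
    rw [hs, map_sum]
    refine Finset.sum_congr rfl fun i _ => ?_
    rw [_root_.map_mul, MvPolynomial.map_C, map_esymm]
  have hS1ne : MvPolynomial.map φ s1 ≠ 0 := fun h0 => hs1ne (hmapinj (by rw [h0, map_zero]))
  have hS2ne : MvPolynomial.map φ s2 ≠ 0 := fun h0 => hs2ne (hmapinj (by rw [h0, map_zero]))
  obtain ⟨c, hc⟩ := stmt10_key (fun i => φ (a1 i)) (fun i => φ (a2 i))
    (MvPolynomial.map φ s1) (MvPolynomial.map φ s2)
    (hmapcomb a1 s1 ha1) (hmapcomb a2 s2 ha2)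
    hS1ne hS2ne h hunotu hd1 hd2
  -- descend the constant to F
  obtain ⟨d, hd⟩ : ∃ d, d ∈ s1.support := by
    rcases Finset.eq_empty_or_nonempty s1.support with he | ⟨d, hd⟩
    · exact absurd (support_eq_empty.mp he) hs1ne
    · exact ⟨d, hd⟩
  have hA : coeff d s1 ≠ 0 := mem_support_iff.mp hd
  have hcoeff : φ (coeff d s2) = c * φ (coeff d s1) := by
    have h3 := congrArg (coeff d) hc
    rwa [coeff_C_mul, coeff_map, coeff_map] at h3
  have hφA : φ (coeff d s1) ≠ 0 := fun h0 => hA (hφinj (by rw [h0, map_zero]))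
  set c0 : F := coeff d s2 * (coeff d s1)⁻¹ with hc0
  have hφc0 : φ c0 = c := by
    rw [hc0, map_mul, map_inv₀, hcoeff]
    rw [mul_assoc, mul_inv_cancel₀ hφA, mul_one]
  refine ⟨c0, hmapinj ?_⟩
  rw [_root_.map_mul, MvPolynomial.map_C, hφc0, hc]
end

section
/- Let q be a prime power and m a positive integer. Let s = a_0 + a_1·σ_m^1 + ⋯ + a_m·σ_m^m ∈ F_q[x_1,…,x_m] with a_0,…,a_m ∈ F_q and a_i ≠ 0 for some i ≥ 1. Then either s is absolutely irreducible (irreducible in \overline{F_q}[x_1,…,x_m]), or there exist a, α ∈ F_q with s = a·∏_{i=1}^m (α + x_i). -/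
open MvPolynomial Finset

set_option linter.unusedSectionVars false
set_option maxHeartbeats 1000000

namespace Stmt11Aux

variable {σ : Type} [Fintype σ] [DecidableEq σ]

/-- indicator finsupp of a finset -/
noncomputable def ind (U : Finset σ) : σ →₀ ℕ := ∑ i ∈ U, Finsupp.single i 1

lemma ind_apply (U : Finset σ) (j : σ) : ind U j = if j ∈ U then 1 else 0 := by
  classical
  simp [ind, Finsupp.finset_sum_apply, Finsupp.single_apply, Finset.sum_ite_eq]

lemma ind_inj (U V : Finset σ) (h : ind U = ind V) : U = V := by
  ext j
  have := congrArg (fun d => d j) h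
  simp only [ind_apply] at this
  by_cases hU : j ∈ U <;> by_cases hV : j ∈ V <;> simp_all

section CRing
variable {R : Type} [CommRing R]

lemma coeff_esymm_ind (U : Finset σ) (n : ℕ) :
    coeff (ind U) (esymm σ R n) = if U.card = n then 1 else 0 := by
  rw [esymm_eq_sum_monomial]
  rw [coeff_sum]
  have key : ∀ t ∈ powersetCard n (univ : Finset σ),
      coeff (ind U) (monomial (∑ i ∈ t, Finsupp.single i 1) (1 : R))
        = if t = U then 1 else 0 := by
    intro t _
    rw [coeff_monomial]
    congr 1
    simp only [eq_iff_iff]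
    constructor
    · intro h; exact (ind_inj t U h)
    · intro h; rw [h]; rfl
  rw [Finset.sum_congr rfl key]
  rw [Finset.sum_ite_eq' (powersetCard n (univ : Finset σ)) U (fun _ => (1 : R))]
  simp [Finset.mem_powersetCard_univ]

lemma coeff_esymm_nonsq (d : σ →₀ ℕ) (i : σ) (hd : 2 ≤ d i) (n : ℕ) :
    coeff d (esymm σ R n) = 0 := by
  rw [esymm_eq_sum_monomial, coeff_sum]
  apply Finset.sum_eq_zero
  intro t _
  rw [coeff_monomial, if_neg]
  intro h
  have : ind t i = d i := by rw [← h]; rfl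
  rw [ind_apply] at this
  by_cases ht : i ∈ t <;> simp [ht] at this <;> omega

lemma coeff_mul_disjoint (f g : MvPolynomial σ R) (S T V W : Finset σ)
    (hST : Disjoint S T)
    (hf : ∀ d ∈ f.support, ∀ i, i ∉ S → d i = 0)
    (hg : ∀ d ∈ g.support, ∀ i, i ∉ T → d i = 0)
    (hV : V ⊆ S) (hW : W ⊆ T) :
    coeff (ind (V ∪ W)) (f * g) = coeff (ind V) f * coeff (ind W) g := by
  classical
  rw [coeff_mul]
  have hdisj : Disjoint V W := hST.mono hV hW
  have hsum : ind V + ind W = ind (V ∪ W) := by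
    ext j
    simp only [Finsupp.add_apply, ind_apply]
    by_cases hVj : j ∈ V
    · have : j ∉ W := fun hw => (Finset.disjoint_left.mp hdisj hVj) hw
      simp [hVj, this]
    · by_cases hWj : j ∈ W <;> simp [hVj, hWj]
  apply Finset.sum_eq_single_of_mem (⟨ind V, ind W⟩ : (σ →₀ ℕ) × (σ →₀ ℕ))
  · rw [Finset.HasAntidiagonal.mem_antidiagonal]; exact hsum
  · rintro ⟨d₁, d₂⟩ hmem hne
    rw [Finset.HasAntidiagonal.mem_antidiagonal] at hmem
    by_contra hnz
    have hd₁ : coeff d₁ f ≠ 0 := fun h => hnz (by simp [h])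
    have hd₂ : coeff d₂ g ≠ 0 := fun h => hnz (by simp [h])
    have hs₁ : ∀ i, i ∉ S → d₁ i = 0 := hf d₁ (mem_support_iff.mpr hd₁)
    have hs₂ : ∀ i, i ∉ T → d₂ i = 0 := hg d₂ (mem_support_iff.mpr hd₂)
    apply hne
    have happ : ∀ j, d₁ j + d₂ j = ind (V ∪ W) j := fun j => by
      have := congrArg (fun d => d j) hmem; simpa using this
    have h1 : d₁ = ind V := by
      ext j
      rw [ind_apply]
      by_cases hjS : j ∈ S
      · have hjT : j ∉ T := Finset.disjoint_left.mp hST hjS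
        have h2 : d₂ j = 0 := hs₂ j hjT
        have := happ j
        rw [h2, ind_apply] at this
        by_cases hjV : j ∈ V
        · simp [hjV, Finset.mem_union] at this ⊢; omega
        · have hjW : j ∉ W := fun hw => hjT (hW hw)
          simp [hjV, hjW, Finset.mem_union] at this ⊢; omega
      · have hjV : j ∉ V := fun hv => hjS (hV hv)
        simp [hjV, hs₁ j hjS]
    have h2 : d₂ = ind W := by
      ext j
      have h4 : ind V j + d₂ j = ind (V ∪ W) j := h1 ▸ happ j
      simp only [ind_apply, Finset.mem_union] at h4 ⊢
      by_cases hjV : j ∈ V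
      · have hjW : j ∉ W := fun hw => (Finset.disjoint_left.mp hdisj hjV) hw
        simp [hjV, hjW] at h4 ⊢; omega
      · by_cases hjW : j ∈ W <;> simp [hjV, hjW] at h4 ⊢ <;> omega
    simp [h1, h2]

end CRing

section Fld
variable {K : Type} [Field K]

lemma degreeOf_mul_eq_add {n : ℕ} (f g : MvPolynomial (Fin (n+1)) K)
    (hf : f ≠ 0) (hg : g ≠ 0) (i : Fin (n+1)) :
    degreeOf i (f * g) = degreeOf i f + degreeOf i g := by
  classical
  set e := Equiv.swap i (0 : Fin (n+1)) with he
  have hei : e i = 0 := Equiv.swap_apply_left _ _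
  have h1 : degreeOf i (f * g) = degreeOf (0 : Fin (n+1)) (rename e (f * g)) := by
    rw [← hei, degreeOf_rename_of_injective e.injective]
  have h2 : degreeOf i f = degreeOf (0 : Fin (n+1)) (rename e f) := by
    rw [← hei, degreeOf_rename_of_injective e.injective]
  have h3 : degreeOf i g = degreeOf (0 : Fin (n+1)) (rename e g) := by
    rw [← hei, degreeOf_rename_of_injective e.injective]
  rw [h1, h2, h3, map_mul]
  have hrinj : Function.Injective (rename (⇑e) : MvPolynomial (Fin (n+1)) K → MvPolynomial (Fin (n+1)) K) :=
    rename_injective _ e.injective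
  have hrf : rename (⇑e) f ≠ 0 := fun h => hf (hrinj (by simpa using h))
  have hrg : rename (⇑e) g ≠ 0 := fun h => hg (hrinj (by simpa using h))
  rw [← natDegree_finSuccEquiv, ← natDegree_finSuccEquiv, ← natDegree_finSuccEquiv, map_mul]
  apply Polynomial.natDegree_mul
  · simpa using hrf
  · simpa using hrg

lemma eq_C_of_degreeOf_eq_zero {σ : Type} [Fintype σ] (f : MvPolynomial σ K)
    (h : ∀ i, degreeOf i f = 0) : f = C (coeff 0 f) := by
  classical
  ext d
  by_cases hd : d = 0
  · subst hd; simp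
  · obtain ⟨i, hi⟩ : ∃ i, d i ≠ 0 := by
      by_contra hc; push_neg at hc; exact hd (Finsupp.ext hc)
    rw [coeff_C, if_neg (fun h' => hd h'.symm)]
    by_contra hne
    have hmem : d ∈ f.support := by rwa [mem_support_iff]
    have := monomial_le_degreeOf i hmem
    rw [h i] at this
    omega

end Fld


section Key
variable {K : Type} [Field K]

lemma key (n : ℕ) (b : Fin (n+2) → K)
    (hb : ∃ i : Fin (n+2), 1 ≤ (i:ℕ) ∧ b i ≠ 0)
    (hred : ¬ Irreducible (∑ i : Fin (n+2), C (b i) * esymm (Fin (n+1)) K (i:ℕ))) :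
    b (Fin.last (n+1)) ≠ 0 ∧ ∀ j : Fin (n+2),
      b j = b (Fin.last (n+1)) *
        (b ⟨n, by omega⟩ / b (Fin.last (n+1))) ^ ((n+1) - (j:ℕ)) := by
  classical
  set s : MvPolynomial (Fin (n+1)) K :=
    ∑ i : Fin (n+2), C (b i) * esymm (Fin (n+1)) K (i:ℕ) with hs
  set A : ℕ → K := fun j => if h : j < n + 2 then b ⟨j, h⟩ else 0 with hA
  have hAb : ∀ i : Fin (n+2), A (i : ℕ) = b i := by
    intro i; simp only [hA]; rw [dif_pos i.isLt]
  -- coefficient of a squarefree monomial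
  have coeff_s : ∀ U : Finset (Fin (n+1)), coeff (ind U) s = A U.card := by
    intro U
    have hUlt : U.card < n + 2 := by
      have := Finset.card_le_univ U
      simp only [Fintype.card_fin] at this; omega
    rw [hs, coeff_sum]
    rw [Finset.sum_eq_single (⟨U.card, hUlt⟩ : Fin (n+2))]
    · rw [coeff_C_mul, coeff_esymm_ind]
      simp [hA, hUlt]
    · intro i _ hne
      rw [coeff_C_mul, coeff_esymm_ind, if_neg, mul_zero]
      intro h; exact hne (by ext; simp [← h])
    · intro h; exact absurd (Finset.mem_univ _) h
  -- squarefree support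
  have sqfree : ∀ d ∈ s.support, ∀ i, d i ≤ 1 := by
    intro d hd i
    by_contra hcon
    push_neg at hcon
    rw [mem_support_iff] at hd
    apply hd
    rw [hs, coeff_sum]
    apply Finset.sum_eq_zero
    intro j _
    rw [coeff_C_mul, coeff_esymm_nonsq d i (by omega), mul_zero]
  -- the top nonzero index k
  set k : ℕ := Nat.findGreatest (fun j => A j ≠ 0) (n+1) with hk
  obtain ⟨i₀, hi₀1, hi₀⟩ := hb
  have hwit : A (i₀ : ℕ) ≠ 0 := by rw [hAb i₀]; exact hi₀
  have hi₀le : (i₀ : ℕ) ≤ n + 1 := by omega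
  have hk1 : 1 ≤ k := by
    rw [hk]; exact le_trans hi₀1 (Nat.le_findGreatest (P := fun j => A j ≠ 0) hi₀le hwit)
  have hkm : k ≤ n + 1 := by rw [hk]; exact Nat.findGreatest_le _
  have hAk : A k ≠ 0 := by
    rw [hk]; exact Nat.findGreatest_spec (P := fun j => A j ≠ 0) hi₀le hwit
  have hAgt : ∀ j, k < j → A j = 0 := by
    intro j hj
    by_cases hjm : j ≤ n + 1
    · rw [hk] at hj
      exact of_not_not (Nat.findGreatest_is_greatest (P := fun j => A j ≠ 0) hj hjm)
    · simp only [hA]; rw [dif_neg]; omega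
  -- a set of any admissible size containing a given element
  have existsU : ∀ (i : Fin (n+1)) (c : ℕ), 1 ≤ c → c ≤ n + 1 →
      ∃ U : Finset (Fin (n+1)), i ∈ U ∧ U.card = c := by
    intro i c hc1 hc2
    obtain ⟨W, hWsub, hWcard⟩ := Finset.exists_subset_card_eq
      (show c - 1 ≤ (Finset.univ.erase i).card by
        rw [Finset.card_erase_of_mem (Finset.mem_univ i)]
        simp only [Finset.card_univ, Fintype.card_fin]; omega)
    refine ⟨insert i W, Finset.mem_insert_self _ _, ?_⟩
    rw [Finset.card_insert_of_notMem (fun h => (Finset.mem_erase.mp (hWsub h)).1 rfl), hWcard]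
    omega
  -- each variable has degree exactly one
  have hdeg1 : ∀ i : Fin (n+1), degreeOf i s = 1 := by
    intro i
    obtain ⟨U, hiU, hUc⟩ := existsU i k hk1 hkm
    have hUs : ind U ∈ s.support := by
      rw [mem_support_iff, coeff_s, hUc]; exact hAk
    have hlow : 1 ≤ degreeOf i s := by
      have := monomial_le_degreeOf i hUs
      rwa [ind_apply, if_pos hiU] at this
    have hhigh : degreeOf i s ≤ 1 := degreeOf_le_iff.mpr (fun d hd => sqfree d hd i)
    omega
  have hs0 : s ≠ 0 := by
    intro h
    have h1 := hdeg1 0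
    rw [h] at h1
    simp [degreeOf_zero] at h1
  have hsnu : ¬ IsUnit s := by
    intro hu
    have h1 : IsUnit ((finSuccEquiv K n) s) := hu.map _
    have h2 := Polynomial.natDegree_eq_zero_of_isUnit h1
    rw [natDegree_finSuccEquiv, hdeg1 0] at h2
    exact one_ne_zero h2
  rw [irreducible_iff] at hred
  push_neg at hred
  obtain ⟨f, g, hfg, hfnu, hgnu⟩ := hred hsnu
  have hf0 : f ≠ 0 := by rintro rfl; rw [zero_mul] at hfg; exact hs0 hfg
  have hg0 : g ≠ 0 := by rintro rfl; rw [mul_zero] at hfg; exact hs0 hfg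
  have hdadd : ∀ i, degreeOf i f + degreeOf i g = 1 := by
    intro i
    rw [← degreeOf_mul_eq_add f g hf0 hg0 i, ← hfg, hdeg1]
  -- the variable split
  set S : Finset (Fin (n+1)) := Finset.univ.filter (fun i => degreeOf i f = 1) with hSdef
  have hfS : ∀ i, i ∉ S → degreeOf i f = 0 := by
    intro i hi
    have := hdadd i
    rw [hSdef] at hi
    simp only [Finset.mem_filter, Finset.mem_univ, true_and] at hi
    omega
  have hgT : ∀ i, i ∈ S → degreeOf i g = 0 := by
    intro i hi
    have := hdadd i
    rw [hSdef] at hi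
    simp only [Finset.mem_filter, Finset.mem_univ, true_and] at hi
    omega
  have hsuppf : ∀ d ∈ f.support, ∀ i, i ∉ S → d i = 0 := by
    intro d hd i hi
    have := monomial_le_degreeOf i hd
    rw [hfS i hi] at this; omega
  have hsuppg : ∀ d ∈ g.support, ∀ i, i ∉ Sᶜ → d i = 0 := by
    intro d hd i hi
    rw [Finset.notMem_compl] at hi
    have := monomial_le_degreeOf i hd
    rw [hgT i hi] at this; omega
  -- S and Sᶜ are nonempty
  have hSne : S.Nonempty := by
    rw [Finset.nonempty_iff_ne_empty]
    intro hemp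
    have hall : ∀ i, degreeOf i f = 0 := fun i => hfS i (by simp [hemp])
    have hfc := eq_C_of_degreeOf_eq_zero f hall
    have hc0 : coeff 0 f ≠ 0 := fun h => hf0 (by rw [hfc, h, map_zero])
    exact hfnu (hfc ▸ IsUnit.of_mul_eq_one (a := C (coeff 0 f)) (C (coeff 0 f)⁻¹)
      (by rw [← map_mul, mul_inv_cancel₀ hc0, map_one]))
  have hTne : Sᶜ.Nonempty := by
    rw [Finset.nonempty_iff_ne_empty]
    intro hemp
    have hall : ∀ i, degreeOf i g = 0 := by
      intro i
      apply hgT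
      by_contra hiS
      have : i ∈ Sᶜ := Finset.mem_compl.mpr hiS
      rw [hemp] at this
      exact absurd this (Finset.notMem_empty i)
    have hgc := eq_C_of_degreeOf_eq_zero g hall
    have hc0 : coeff 0 g ≠ 0 := fun h => hg0 (by rw [hgc, h, map_zero])
    exact hgnu (hgc ▸ IsUnit.of_mul_eq_one (a := C (coeff 0 g)) (C (coeff 0 g)⁻¹)
      (by rw [← map_mul, mul_inv_cancel₀ hc0, map_one]))
  set p : ℕ := S.card with hp
  set t : ℕ := Sᶜ.card with ht
  have hpt : p + t = n + 1 := by
    rw [hp, ht, Finset.card_add_card_compl]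
    simp [Fintype.card_fin]
  have hp1 : 1 ≤ p := Finset.card_pos.mpr hSne
  have ht1 : 1 ≤ t := Finset.card_pos.mpr hTne
  have hST : Disjoint S Sᶜ := disjoint_compl_right
  have hAmul : ∀ V W : Finset (Fin (n+1)), V ⊆ S → W ⊆ Sᶜ →
      A (V.card + W.card) = coeff (ind V) f * coeff (ind W) g := by
    intro V W hV hW
    have h1 := coeff_mul_disjoint f g S Sᶜ V W hST hsuppf hsuppg hV hW
    rw [← hfg] at h1
    rw [← h1, coeff_s, Finset.card_union_of_disjoint (hST.mono hV hW)]
  have relnum : ∀ v v' w w', v ≤ p → v' ≤ p → w ≤ t → w' ≤ t →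
      A (v+w) * A (v'+w') = A (v+w') * A (v'+w) := by
    intro v v' w w' hv hv' hw hw'
    obtain ⟨V, hVsub, hVcard⟩ := Finset.exists_subset_card_eq hv
    obtain ⟨V', hV'sub, hV'card⟩ := Finset.exists_subset_card_eq hv'
    obtain ⟨W, hWsub, hWcard⟩ := Finset.exists_subset_card_eq hw
    obtain ⟨W', hW'sub, hW'card⟩ := Finset.exists_subset_card_eq hw'
    rw [← hVcard, ← hV'card, ← hWcard, ← hW'card,
      hAmul V W hVsub hWsub, hAmul V' W' hV'sub hW'sub,
      hAmul V W' hVsub hW'sub, hAmul V' W hV'sub hWsub]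
    ring
  by_cases hkcase : k ≤ n
  ·
    exfalso
    obtain ⟨v, w, hv1, hvp, hwt1, hvw⟩ :
        ∃ v w, 1 ≤ v ∧ v ≤ p ∧ w + 1 ≤ t ∧ v + w = k := by
      rcases le_or_gt k p with h | h
      · exact ⟨k, 0, hk1, h, by omega, by omega⟩
      · exact ⟨p, k - p, hp1, le_refl _, by omega, by omega⟩
    have hrel := relnum v (v-1) w (w+1) hvp (by omega) (by omega) hwt1
    rw [show v + w = k from hvw, show v - 1 + (w + 1) = k from by omega,
      show v + (w + 1) = k + 1 from by omega, hAgt (k+1) (by omega), zero_mul] at hrel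
    exact hAk (mul_self_eq_zero.mp hrel)
  · -- k = n + 1 : geometric coefficients
    have hkm1 : k = n + 1 := by omega
    have hAm : A (n+1) ≠ 0 := hkm1 ▸ hAk
    set α : K := A n / A (n+1) with hα
    have choose_vw : ∀ j, j + 2 ≤ n + 1 → ∃ v w, v + 1 ≤ p ∧ w + 1 ≤ t ∧ v + w = j := by
      intro j hj
      rcases le_or_gt j (p-1) with h | h
      · exact ⟨j, 0, by omega, by omega, by omega⟩
      · exact ⟨p - 1, j - (p-1), by omega, by omega, by omega⟩
    have geom : ∀ d, d ≤ n + 1 → A (n + 1 - d) = A (n+1) * α ^ d := by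
      intro d
      induction d using Nat.strong_induction_on with
      | _ d IH =>
        intro hd
        rcases Nat.lt_or_ge d 2 with hd2 | hd2
        · interval_cases d
          · simp
          · show A n = A (n+1) * α ^ 1
            rw [hα, pow_one]
            field_simp
        · obtain ⟨e, rfl⟩ : ∃ e, d = e + 2 := ⟨d - 2, by omega⟩
          set j : ℕ := n + 1 - (e + 2) with hj
          have hj2 : j + 2 ≤ n + 1 := by omega
          obtain ⟨v, w, hvp, hwt, hvw⟩ := choose_vw j hj2
          by_cases hα0 : α = 0
          · have hrel := relnum v p w t (by omega) (le_refl p) (by omega) (le_refl t)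
            have hvt : A (v + t) = 0 := by
              have h5 := IH (n + 1 - (v + t)) (by omega) (by omega)
              rw [show n + 1 - (n + 1 - (v + t)) = v + t from by omega] at h5
              rw [h5, hα0, zero_pow (by omega), mul_zero]
            rw [show v + w = j from hvw, hpt, hvt, zero_mul] at hrel
            have hAj : A j = 0 := by
              rcases mul_eq_zero.mp hrel with h | h
              · exact h
              · exact absurd h hAm
            rw [hAj, hα0, zero_pow (by omega), mul_zero]
          · have hrel := relnum v (v+1) w (w+1) (by omega) hvp (by omega) hwt
            rw [show v + w = j from hvw, show v + 1 + (w + 1) = j + 2 from by omega,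
              show v + (w + 1) = j + 1 from by omega,
              show v + 1 + w = j + 1 from by omega] at hrel
            have h2 := IH e (by omega) (by omega)
            have h1 := IH (e+1) (by omega) (by omega)
            rw [show n + 1 - e = j + 2 from by omega] at h2
            rw [show n + 1 - (e+1) = j + 1 from by omega] at h1
            rw [h1, h2] at hrel
            have hne : A (n+1) * α ^ e ≠ 0 := mul_ne_zero hAm (pow_ne_zero _ hα0)
            apply mul_right_cancel₀ hne
            rw [hrel]
            ring
    have hblast : A (n+1) = b (Fin.last (n+1)) := by
      have := hAb (Fin.last (n+1))
      rwa [Fin.val_last] at this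
    have hAn : A n = b (⟨n, by omega⟩ : Fin (n+2)) := hAb ⟨n, by omega⟩
    constructor
    · rw [← hblast]; exact hAm
    · intro j
      have hjle : (j : ℕ) ≤ n + 1 := by omega
      have hgj := geom (n + 1 - (j : ℕ)) (by omega)
      rw [show n + 1 - (n + 1 - (j:ℕ)) = (j:ℕ) from by omega] at hgj
      have h1 : b j = A (n+1) * α ^ (n + 1 - (j:ℕ)) := by rw [← hAb j]; exact hgj
      rw [h1, hα, hAn, hblast]

end Key

end Stmt11Aux


open Stmt11Aux in
/-- A nonconstant linear combination of elementary symmetric polynomials is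
either absolutely irreducible or splits as `a·∏ (α + x_i)`. -/
theorem stmt11 (q m : ℕ) (F : Type) [Field F] [Fintype F]
    (hcard : Fintype.card F = q) (hm : 0 < m)
    (a : Fin (m + 1) → F) (ha : ∃ i : Fin (m + 1), 1 ≤ (i : ℕ) ∧ a i ≠ 0) :
    Irreducible (MvPolynomial.map (algebraMap F (AlgebraicClosure F))
        (∑ i : Fin (m + 1), C (a i) * esymm (Fin m) F (i : ℕ)))
    ∨ ∃ b α : F, (∑ i : Fin (m + 1), C (a i) * esymm (Fin m) F (i : ℕ))
        = C b * ∏ i : Fin m, (C α + X i) := by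
  classical
  obtain ⟨n, rfl⟩ : ∃ n, m = n + 1 := ⟨m - 1, by omega⟩
  by_cases hirr : Irreducible (MvPolynomial.map (algebraMap F (AlgebraicClosure F))
      (∑ i : Fin (n + 1 + 1), C (a i) * esymm (Fin (n+1)) F (i : ℕ)))
  · exact Or.inl hirr
  right
  set φ : F →+* AlgebraicClosure F := (algebraMap F (AlgebraicClosure F)) with hφ
  have hinj : Function.Injective φ := φ.injective
  have hmap : MvPolynomial.map φ (∑ i : Fin (n+1+1), C (a i) * esymm (Fin (n+1)) F (i:ℕ))
      = ∑ i : Fin (n+2), C (φ (a i)) * esymm (Fin (n+1)) (AlgebraicClosure F) (i:ℕ) := by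
    rw [map_sum]
    apply Finset.sum_congr rfl
    intro i _
    simp [map_esymm]
  rw [hmap] at hirr
  obtain ⟨i₀, hi₀1, hi₀⟩ := ha
  obtain ⟨hlast, hgeo⟩ := key n (fun i => φ (a i))
    ⟨i₀, hi₀1, fun h => hi₀ (hinj (by simpa using h))⟩ hirr
  have hlast0 : a (Fin.last (n+1)) ≠ 0 := fun h => hlast (by simp [h])
  set α₀ : F := a ⟨n, by omega⟩ / a (Fin.last (n+1)) with hα₀
  have haj : ∀ j : Fin (n+2), a j = a (Fin.last (n+1)) * α₀ ^ (n+1 - (j:ℕ)) := by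
    intro j
    apply hinj
    rw [map_mul, map_pow, hα₀, map_div₀]
    exact hgeo j
  refine ⟨a (Fin.last (n+1)), α₀, ?_⟩
  -- Vieta
  have hv := MvPolynomial.prod_C_add_X_eq_sum_esymm F (Fin (n+1))
  have hev := congrArg (Polynomial.eval (C α₀ : MvPolynomial (Fin (n+1)) F)) hv
  simp only [Polynomial.eval_prod, Polynomial.eval_add, Polynomial.eval_X, Polynomial.eval_C,
    Polynomial.eval_finset_sum, Polynomial.eval_mul, Polynomial.eval_pow,
    Fintype.card_fin] at hev
  -- hev : ∏ i, (C α₀ + X i) = ∑ j ∈ range (n+2), esymm j * (C α₀) ^ (n+1-j)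
  rw [hev, Finset.mul_sum]
  rw [← Fin.sum_univ_eq_sum_range
    (fun j => C (a (Fin.last (n+1))) * (esymm (Fin (n+1)) F j * (C α₀) ^ (n+1-j))) (n+2)]
  apply Finset.sum_congr rfl
  intro i _
  rw [haj i, map_mul, ← map_pow]
  ring
end
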